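/- arXiv:1907.03493 — 4 statements merged into one kernel-verified Lean document; each statement's English description precedes it below -/
import Mathlib

section
/- The Hessian of H at (q, A(q)) vanishes on the subspace {(Q, ∇A(q)·Q) : Q ∈ ℝ^d}, and on the subspace {(Q, ∇A(q)ᵀ·Q)} it equals 2 |(∇A(q)ᵀ - ∇A(q)) Q|²_{g*(q)}. -/
open Matrix

/-- Second derivative of `c * u * w` at a point where `u` and `w` vanish. -/
lemma key_hess {E : Type*} [NormedAddCommGroup E] [NormedSpace ℝ E]
    (c u w : E → ℝ) (hc : ContDiff ℝ (⊤ : ℕ∞) c) (hu : ContDiff ℝ (⊤ : ℕ∞) u)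
    (hw : ContDiff ℝ (⊤ : ℕ∞) w) (x : E) (hux : u x = 0) (hwx : w x = 0) (v v' : E) :
    fderiv ℝ (fderiv ℝ (fun y => c y * u y * w y)) x v v' =
      c x * (fderiv ℝ u x v * fderiv ℝ w x v' + fderiv ℝ w x v * fderiv ℝ u x v') := by
  have hc' : Differentiable ℝ c := hc.differentiable (by simp)
  have hu' : Differentiable ℝ u := hu.differentiable (by simp)
  have hw' : Differentiable ℝ w := hw.differentiable (by simp)
  have hdu : Differentiable ℝ (fderiv ℝ u) := (hu.fderiv_right (m := (⊤ : ℕ∞)) (by simp)).differentiable (by simp)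
  have hdw : Differentiable ℝ (fderiv ℝ w) := (hw.fderiv_right (m := (⊤ : ℕ∞)) (by simp)).differentiable (by simp)
  have hdc : Differentiable ℝ (fderiv ℝ c) := (hc.fderiv_right (m := (⊤ : ℕ∞)) (by simp)).differentiable (by simp)
  have hf1 : fderiv ℝ (fun y => c y * u y * w y) = fun y =>
      ((c y * u y) • fderiv ℝ w y + ((w y * c y) • fderiv ℝ u y + (w y * u y) • fderiv ℝ c y)) := by
    funext y
    rw [fderiv_fun_mul ((hc' y).fun_mul (hu' y)) (hw' y), fderiv_fun_mul (hc' y) (hu' y)]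
    rw [smul_add, smul_smul, smul_smul]
  rw [hf1]
  have d1 : DifferentiableAt ℝ (fun y => (c y * u y) • fderiv ℝ w y) x :=
    ((hc' x).mul (hu' x)).smul (hdw x)
  have d2 : DifferentiableAt ℝ (fun y => (w y * c y) • fderiv ℝ u y) x :=
    ((hw' x).mul (hc' x)).smul (hdu x)
  have d3 : DifferentiableAt ℝ (fun y => (w y * u y) • fderiv ℝ c y) x :=
    ((hw' x).mul (hu' x)).smul (hdc x)
  rw [fderiv_fun_add d1 (d2.fun_add d3), fderiv_fun_add d2 d3,
    fderiv_fun_smul ((hc' x).fun_mul (hu' x)) (hdw x),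
    fderiv_fun_smul ((hw' x).fun_mul (hc' x)) (hdu x),
    fderiv_fun_smul ((hw' x).fun_mul (hu' x)) (hdc x),
    fderiv_fun_mul (hc' x) (hu' x), fderiv_fun_mul (hw' x) (hc' x), fderiv_fun_mul (hw' x) (hu' x)]
  simp [hux, hwx]
  ring

/-- The Hessian of the magnetic Hamiltonian `H` at `(q, A(q))` vanishes on the
subspace `{(Q, ∇A(q)Q)}`, and on `{(Q, ∇A(q)ᵀQ)}` it equals
`2 |(∇A(q)ᵀ - ∇A(q)) Q|²_{g*(q)}`. -/
theorem stmt8 {d : ℕ} (G : (Fin d → ℝ) → Matrix (Fin d) (Fin d) ℝ)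
    (hG : ∀ i j, ContDiff ℝ (⊤ : ℕ∞) (fun q => G q i j)) (hGsym : ∀ q, (G q).IsSymm) (hGpd : ∀ q, (G q).PosDef)
    (A : (Fin d → ℝ) → (Fin d → ℝ)) (hA : ContDiff ℝ (⊤ : ℕ∞) A)
    (H : (Fin d → ℝ) × (Fin d → ℝ) → ℝ)
    (hH : ∀ p, H p = ∑ i, ∑ j, G p.1 i j * (p.2 i - A p.1 i) * (p.2 j - A p.1 j))
    (q Q : Fin d → ℝ) :
    (iteratedFDeriv ℝ 2 H (q, A q)
        ![(Q, fderiv ℝ A q Q), (Q, fderiv ℝ A q Q)] = 0) ∧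
    (iteratedFDeriv ℝ 2 H (q, A q)
        ![(Q, fun i => ∑ j, fderiv ℝ A q (Pi.single i 1) j * Q j),
          (Q, fun i => ∑ j, fderiv ℝ A q (Pi.single i 1) j * Q j)]
      = 2 * ∑ i, ∑ j, G q i j
          * ((∑ k, fderiv ℝ A q (Pi.single i 1) k * Q k) - fderiv ℝ A q Q i)
          * ((∑ k, fderiv ℝ A q (Pi.single j 1) k * Q k) - fderiv ℝ A q Q j)) := by
  classical
  have hHsum : H = (∑ ij : Fin d × Fin d,
      (fun p : (Fin d → ℝ) × (Fin d → ℝ) =>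
        G p.1 ij.1 ij.2 * (p.2 ij.1 - A p.1 ij.1) * (p.2 ij.2 - A p.1 ij.2)) ·) := by
    funext p
    rw [hH, Fintype.sum_prod_type]
  have hu : ∀ i : Fin d, ContDiff ℝ (⊤ : ℕ∞)
      (fun p : (Fin d → ℝ) × (Fin d → ℝ) => p.2 i - A p.1 i) := fun i =>
    ((contDiff_pi.mp contDiff_snd i)).sub ((contDiff_pi.mp (hA.comp contDiff_fst)) i)
  have hc : ∀ i j : Fin d, ContDiff ℝ (⊤ : ℕ∞)
      (fun p : (Fin d → ℝ) × (Fin d → ℝ) => G p.1 i j) := fun i j =>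
    (hG i j).comp contDiff_fst
  have hu0 : ∀ i : Fin d,
      (fun p : (Fin d → ℝ) × (Fin d → ℝ) => p.2 i - A p.1 i) (q, A q) = 0 := by
    intro i; simp
  have hfd : ∀ i : Fin d, ∀ v : (Fin d → ℝ) × (Fin d → ℝ),
      fderiv ℝ (fun p : (Fin d → ℝ) × (Fin d → ℝ) => p.2 i - A p.1 i) (q, A q) v
        = v.2 i - fderiv ℝ A q v.1 i := by
    intro i v
    have hAq : HasFDerivAt A (fderiv ℝ A q) q := (hA.differentiable (by simp) q).hasFDerivAt
    have h1 : HasFDerivAt (fun p : (Fin d → ℝ) × (Fin d → ℝ) => p.2 i)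
        ((ContinuousLinearMap.proj i).comp (ContinuousLinearMap.snd ℝ (Fin d → ℝ) (Fin d → ℝ)))
        (q, A q) :=
      ((ContinuousLinearMap.proj (R := ℝ) (φ := fun _ : Fin d => ℝ) i).comp
        (ContinuousLinearMap.snd ℝ (Fin d → ℝ) (Fin d → ℝ))).hasFDerivAt
    have hf1 : HasFDerivAt (fun p : (Fin d → ℝ) × (Fin d → ℝ) => A p.1)
        ((fderiv ℝ A q).comp (ContinuousLinearMap.fst ℝ (Fin d → ℝ) (Fin d → ℝ))) (q, A q) :=
      hAq.comp (q, A q) hasFDerivAt_fst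
    have h2 : HasFDerivAt (fun p : (Fin d → ℝ) × (Fin d → ℝ) => A p.1 i)
        ((ContinuousLinearMap.proj i).comp
          ((fderiv ℝ A q).comp (ContinuousLinearMap.fst ℝ (Fin d → ℝ) (Fin d → ℝ)))) (q, A q) :=
      (ContinuousLinearMap.proj (R := ℝ) (φ := fun _ : Fin d => ℝ) i).hasFDerivAt.comp
        (q, A q) hf1
    rw [(h1.fun_sub h2).fderiv]
    simp
  have main : ∀ v : (Fin d → ℝ) × (Fin d → ℝ), iteratedFDeriv ℝ 2 H (q, A q) ![v, v]
      = ∑ i, ∑ j, 2 * (G q i j *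
          ((v.2 i - fderiv ℝ A q v.1 i) * (v.2 j - fderiv ℝ A q v.1 j))) := by
    intro v
    rw [hHsum, iteratedFDeriv_sum (fun ij _ =>
      (((hc ij.1 ij.2).mul (hu ij.1)).mul (hu ij.2)).of_le (by exact WithTop.coe_le_coe.2 le_top))]
    simp only [Finset.sum_apply, ContinuousMultilinearMap.sum_apply]
    rw [Fintype.sum_prod_type]
    refine Finset.sum_congr rfl fun i _ => ?_
    refine Finset.sum_congr rfl fun j _ => ?_
    have hij : (i, j).1 = i := rfl
    rw [iteratedFDeriv_two_apply]
    simp only [Matrix.cons_val_zero, Matrix.cons_val_one, Matrix.head_cons]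
    rw [key_hess (fun p : (Fin d → ℝ) × (Fin d → ℝ) => G p.1 i j)
      (fun p => p.2 i - A p.1 i) (fun p => p.2 j - A p.1 j)
      (hc i j) (hu i) (hu j) (q, A q) (hu0 i) (hu0 j) v v,
      hfd i v, hfd j v]
    ring
  constructor
  · rw [main]
    simp
  · rw [main]
    rw [Finset.mul_sum]
    refine Finset.sum_congr rfl fun i _ => ?_
    rw [Finset.mul_sum]
    refine Finset.sum_congr rfl fun j _ => ?_
    simp only
    ring
end

section
/- Cohomological equation solvability: with T as above and non-resonance up to order r, for every N ≤ r−1 and every homogeneous polynomial R of degree N, setting K = Σ_{α=γ} r_{ααℓ} z^α\bar z^α (the 'resonant part' of R) and τ = Σ_{α≠γ} (r_{αγℓ}/⟨α−γ,β⟩) z^α \bar z^γ, one has R − K = T(τ) and [K, |z_j|²]_{Poisson} = 0 for every j. -/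
/-!
The first claim is coefficientwise: off the diagonal `τ_{αγ} = r_{αγ} / ⟨α - γ, β⟩`, and the
divisor does not vanish by non-resonance, because `|α - γ|₁ ≤ |α| + |γ| = N < r`.

For the second, a resonant monomial `z^α z̄^α = ∏ |z_k|^{2α_k}` is a polynomial in the actions
`I_k = x_k² + ξ_k²`. Since `∂I_k/∂x_k = 2x_k` and `∂I_k/∂ξ_k = 2ξ_k`, the chain rule gives
`∂F/∂x_k = 2x_k ∂_k g` and `∂F/∂ξ_k = 2ξ_k ∂_k g` for any `F = g(I)`, so every term of the Poisson
bracket of two functions of the actions cancels.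
-/

open Finset

section Homological

theorem sum_sub_mul_ne_zero_of_nonresonant {n r : ℕ} {β : Fin n → ℝ}
    (hres : ∀ α : Fin n → ℤ, α ≠ 0 → (∑ j, (α j).natAbs) < r → (∑ j, (α j : ℝ) * β j) ≠ 0)
    {a b : Fin n → ℕ} (hab : a ≠ b) (hdeg : ∑ j, a j + ∑ j, b j ≤ r - 1) :
    ∑ j, ((a j : ℝ) - b j) * β j ≠ 0 := by
  set α : Fin n → ℤ := fun j => (a j : ℤ) - b j
  have hα : α ≠ 0 := fun h => hab <| funext fun j => by
    simpa [α, sub_eq_zero] using congrFun h j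
  have hα_pos : 0 < ∑ j, (α j).natAbs := by
    obtain ⟨j, hj⟩ := Function.ne_iff.mp hα
    exact (Int.natAbs_pos.mpr hj).trans_le (single_le_sum (f := fun j => (α j).natAbs) (fun _ _ => Nat.zero_le _) (mem_univ j))
  have hα_le : ∑ j, (α j).natAbs ≤ ∑ j, a j + ∑ j, b j := by
    rw [← sum_add_distrib]
    exact sum_le_sum fun j _ => by simpa using Int.natAbs_sub_le (a j : ℤ) (b j)
  simpa [α] using hres α hα (by omega)

theorem sub_resonantPart_eq_divisor_mul {n r : ℕ} {β : Fin n → ℝ}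
    (hres : ∀ α : Fin n → ℤ, α ≠ 0 → (∑ j, (α j).natAbs) < r → (∑ j, (α j : ℝ) * β j) ≠ 0)
    {R K τ : ((Fin n → ℕ) × (Fin n → ℕ)) →₀ ℂ}
    (hR : ∀ p ∈ R.support, (∑ j, p.1 j) + ∑ j, p.2 j ≤ r - 1)
    (hK : ∀ p, K p = if p.1 = p.2 then R p else 0)
    (hτ : ∀ p, τ p = if p.1 = p.2 then 0
      else R p / ((∑ j, ((p.1 j : ℝ) - (p.2 j : ℝ)) * β j : ℝ) : ℂ))
    (p : (Fin n → ℕ) × (Fin n → ℕ)) :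
    R p - K p = ((∑ j, ((p.1 j : ℝ) - (p.2 j : ℝ)) * β j : ℝ) : ℂ) * τ p := by
  rw [hK, hτ]
  split_ifs with hp
  · simp
  by_cases hRp : R p = 0
  · simp [hRp]
  have hdiv := sum_sub_mul_ne_zero_of_nonresonant hres hp (hR p (Finsupp.mem_support_iff.mpr hRp))
  rw [sub_zero, mul_div_cancel₀ _ (by exact_mod_cast hdiv)]

end Homological

section Actions

variable {n : ℕ}

abbrev PhaseSpace (n : ℕ) := (Fin n → ℝ) × (Fin n → ℝ)

noncomputable def poissonBracket (F G : PhaseSpace n → ℂ) (q : PhaseSpace n) : ℂ :=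
  ∑ k, (fderiv ℝ F q (0, Pi.single k 1) * fderiv ℝ G q (Pi.single k 1, 0)
    - fderiv ℝ F q (Pi.single k 1, 0) * fderiv ℝ G q (0, Pi.single k 1))

def actions (w : PhaseSpace n) : Fin n → ℂ :=
  fun k => (w.1 k : ℂ) ^ 2 + (w.2 k : ℂ) ^ 2

theorem differentiable_actions : Differentiable ℝ (actions (n := n)) := by
  unfold actions
  fun_prop

theorem fderiv_actions_apply (q v : PhaseSpace n) :
    fderiv ℝ actions q v = fun k => 2 * (q.1 k : ℂ) * v.1 k + 2 * (q.2 k : ℂ) * v.2 k := by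
  unfold actions
  rw [fderiv_pi fun k => by fun_prop]
  funext k
  rw [ContinuousLinearMap.pi_apply]
  have hx : fderiv ℝ (fun w : PhaseSpace n => (w.1 k : ℂ)) q v = v.1 k :=
    congrArg (· v) (Complex.ofRealCLM.comp ((ContinuousLinearMap.proj k).comp
      (ContinuousLinearMap.fst ℝ (Fin n → ℝ) (Fin n → ℝ)))).fderiv
  have hy : fderiv ℝ (fun w : PhaseSpace n => (w.2 k : ℂ)) q v = v.2 k :=
    congrArg (· v) (Complex.ofRealCLM.comp ((ContinuousLinearMap.proj k).comp
      (ContinuousLinearMap.snd ℝ (Fin n → ℝ) (Fin n → ℝ)))).fderiv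
  rw [fderiv_fun_add (by fun_prop) (by fun_prop), fderiv_fun_pow _ (by fun_prop),
    fderiv_fun_pow _ (by fun_prop)]
  simp [hx, hy]

theorem fderiv_comp_actions_apply {g : (Fin n → ℂ) → ℂ} {q : PhaseSpace n}
    (hg : DifferentiableAt ℝ g (actions q)) (v : PhaseSpace n) :
    fderiv ℝ (g ∘ actions) q v
      = fderiv ℝ g (actions q) (fun k => 2 * (q.1 k : ℂ) * v.1 k + 2 * (q.2 k : ℂ) * v.2 k) := by
  rw [fderiv_comp q hg (differentiable_actions q), ContinuousLinearMap.comp_apply,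
    fderiv_actions_apply]

theorem fderiv_comp_actions_single_fst {g : (Fin n → ℂ) → ℂ} {q : PhaseSpace n}
    (hg : DifferentiableAt ℝ g (actions q)) (k : Fin n) :
    fderiv ℝ (g ∘ actions) q (Pi.single k 1, 0)
      = 2 * (q.1 k : ℂ) * fderiv ℝ g (actions q) (Pi.single k 1) := by
  rw [fderiv_comp_actions_apply hg, ← Complex.ofReal_ofNat, ← Complex.ofReal_mul,
    ← Complex.real_smul, ← map_smul]
  congr 1
  funext m
  rcases eq_or_ne m k with rfl | hm <;> simp [*]

theorem fderiv_comp_actions_single_snd {g : (Fin n → ℂ) → ℂ} {q : PhaseSpace n}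
    (hg : DifferentiableAt ℝ g (actions q)) (k : Fin n) :
    fderiv ℝ (g ∘ actions) q (0, Pi.single k 1)
      = 2 * (q.2 k : ℂ) * fderiv ℝ g (actions q) (Pi.single k 1) := by
  rw [fderiv_comp_actions_apply hg, ← Complex.ofReal_ofNat, ← Complex.ofReal_mul,
    ← Complex.real_smul, ← map_smul]
  congr 1
  funext m
  rcases eq_or_ne m k with rfl | hm <;> simp [*]

theorem poissonBracket_comp_actions {g h : (Fin n → ℂ) → ℂ} {q : PhaseSpace n}
    (hg : DifferentiableAt ℝ g (actions q)) (hh : DifferentiableAt ℝ h (actions q)) :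
    poissonBracket (g ∘ actions) (h ∘ actions) q = 0 := by
  refine sum_eq_zero fun k _ => ?_
  simp only [fderiv_comp_actions_single_fst, fderiv_comp_actions_single_snd, hg, hh]
  ring

theorem pow_mul_conj_pow_eq_actions_pow (w : PhaseSpace n) (k : Fin n) (a : ℕ) :
    ((w.1 k : ℂ) + Complex.I * w.2 k) ^ a * (starRingEnd ℂ) ((w.1 k : ℂ) + Complex.I * w.2 k) ^ a
      = actions w k ^ a := by
  rw [← mul_pow, Complex.mul_conj, mul_comm Complex.I, Complex.normSq_add_mul_I]
  push_cast [actions]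
  rfl

end Actions

theorem stmt11_general {n : ℕ} (r : ℕ) (β : Fin n → ℝ)
    (hres : ∀ α : Fin n → ℤ, α ≠ 0 → (∑ j, (α j).natAbs) < r →
      (∑ j, (α j : ℝ) * β j) ≠ 0)
    (N : ℕ) (hN : N ≤ r - 1)
    (R K τ : ((Fin n → ℕ) × (Fin n → ℕ)) →₀ ℂ)
    (hR : ∀ p ∈ R.support, ((∑ j, p.1 j) + ∑ j, p.2 j) = N)
    (hK : ∀ p, K p = if p.1 = p.2 then R p else 0)
    (hτ : ∀ p, τ p = if p.1 = p.2 then 0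
      else R p / ((∑ j, ((p.1 j : ℝ) - (p.2 j : ℝ)) * β j : ℝ) : ℂ))
    (fK : ((Fin n → ℝ) × (Fin n → ℝ)) → ℂ)
    (hfK : ∀ q, fK q = K.sum (fun p c =>
      c * (∏ k, ((q.1 k : ℂ) + Complex.I * (q.2 k : ℂ)) ^ (p.1 k))
        * ∏ k, ((starRingEnd ℂ) ((q.1 k : ℂ) + Complex.I * (q.2 k : ℂ))) ^ (p.2 k))) :
    (∀ p, R p - K p
        = ((∑ j, ((p.1 j : ℝ) - (p.2 j : ℝ)) * β j : ℝ) : ℂ) * τ p) ∧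
    ∀ j : Fin n, ∀ fI : ((Fin n → ℝ) × (Fin n → ℝ)) → ℂ,
      (∀ q, fI q = ((q.1 j : ℂ)) ^ 2 + ((q.2 j : ℂ)) ^ 2) →
      ∀ q, ∑ k, (fderiv ℝ fK q ((0 : Fin n → ℝ), Pi.single k 1)
              * fderiv ℝ fI q (Pi.single k 1, (0 : Fin n → ℝ))
          - fderiv ℝ fK q (Pi.single k 1, (0 : Fin n → ℝ))
              * fderiv ℝ fI q ((0 : Fin n → ℝ), Pi.single k 1)) = 0 := by
  refine ⟨sub_resonantPart_eq_divisor_mul hres (fun p hp => (hR p hp).trans_le hN) hK hτ,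
    fun j fI hfI q => ?_⟩
  let g : (Fin n → ℂ) → ℂ := fun v => K.sum fun p c => c * ∏ k, v k ^ p.1 k
  have hg : Differentiable ℝ g := by
    unfold g Finsupp.sum
    fun_prop
  have hfK_eq : fK = g ∘ actions := funext fun w => by
    rw [hfK, Function.comp_apply]
    refine sum_congr rfl fun p hp => ?_
    have hdiag : p.1 = p.2 := by
      by_contra h
      simp [hK, h] at hp
    simp only [← hdiag, mul_assoc, ← prod_mul_distrib, pow_mul_conj_pow_eq_actions_pow]
  have hfI_eq : fI = (fun v => v j) ∘ actions := funext hfI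
  rw [hfK_eq, hfI_eq]
  exact poissonBracket_comp_actions (hg _) (by fun_prop)

/-- Cohomological equation: with `K` the resonant part of `R` and
`τ = Σ_{α≠γ} r_{αγ}/⟨α-γ,β⟩ z^α z̄^γ`, one has `R - K = T τ`, and the function
associated to `K` Poisson-commutes with every `|z_j|² = x_j² + ξ_j²`. -/
theorem stmt11 {n : ℕ} (r : ℕ) (hr : 3 ≤ r) (β : Fin n → ℝ)
    (hβ : ∀ j, 0 < β j)
    (hres : ∀ α : Fin n → ℤ, α ≠ 0 → (∑ j, (α j).natAbs) < r →
      (∑ j, (α j : ℝ) * β j) ≠ 0)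
    (N : ℕ) (hN : N ≤ r - 1)
    (R K τ : ((Fin n → ℕ) × (Fin n → ℕ)) →₀ ℂ)
    (hR : ∀ p ∈ R.support, ((∑ j, p.1 j) + ∑ j, p.2 j) = N)
    (hK : ∀ p, K p = if p.1 = p.2 then R p else 0)
    (hτ : ∀ p, τ p = if p.1 = p.2 then 0
      else R p / ((∑ j, ((p.1 j : ℝ) - (p.2 j : ℝ)) * β j : ℝ) : ℂ))
    (fK : ((Fin n → ℝ) × (Fin n → ℝ)) → ℂ)
    (hfK : ∀ q, fK q = K.sum (fun p c =>
      c * (∏ k, ((q.1 k : ℂ) + Complex.I * (q.2 k : ℂ)) ^ (p.1 k))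
        * ∏ k, ((starRingEnd ℂ) ((q.1 k : ℂ) + Complex.I * (q.2 k : ℂ))) ^ (p.2 k))) :
    (∀ p, R p - K p
        = ((∑ j, ((p.1 j : ℝ) - (p.2 j : ℝ)) * β j : ℝ) : ℂ) * τ p) ∧
    ∀ j : Fin n, ∀ fI : ((Fin n → ℝ) × (Fin n → ℝ)) → ℂ,
      (∀ q, fI q = ((q.1 j : ℂ)) ^ 2 + ((q.2 j : ℂ)) ^ 2) →
      ∀ q, ∑ k, (fderiv ℝ fK q ((0 : Fin n → ℝ), Pi.single k 1)
              * fderiv ℝ fI q (Pi.single k 1, (0 : Fin n → ℝ))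
          - fderiv ℝ fK q (Pi.single k 1, (0 : Fin n → ℝ))
              * fderiv ℝ fI q ((0 : Fin n → ℝ), Pi.single k 1)) = 0 :=
  stmt11_general r β hres N hN R K τ hR hK hτ fK hfK
end

section
/- Agmon identity (Euclidean version): Let ψ ∈ C_0^∞(ℝ^d; ℂ) satisfy (iħ∇ + A)*(iħ∇ + A)ψ = λψ with A smooth real and λ ∈ ℝ, and let Φ : ℝ^d → ℝ be smooth with e^Φ ψ compactly supported. Then ∫ |(iħ∇ + A)(e^Φ ψ)|² dx = λ ∫ |e^Φ ψ|² dx + ħ² ∫ |∇Φ|² |e^Φ ψ|² dx. -/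
open MeasureTheory

private lemma aux_int_fderiv_zero {d : ℕ} (g : (Fin d → ℝ) → ℝ)
    (hg : ContDiff ℝ (⊤ : ℕ∞) g) (hgs : HasCompactSupport g) (v : Fin d → ℝ) :
    ∫ x : Fin d → ℝ, fderiv ℝ g x v = 0 := by
  obtain ⟨C, hC⟩ := ContDiff.lipschitzWith_of_hasCompactSupport hgs hg (by simp)
  have h := LipschitzWith.integral_lineDeriv_mul_eq (μ := volume)
      (LipschitzWith.const (b := (1:ℝ))) hC hgs (-v)
  have hl : ∀ x : Fin d → ℝ, lineDeriv ℝ (fun _ : Fin d → ℝ => (1:ℝ)) x (-v) = 0 := by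
    intro x; simp [lineDeriv]
  simp only [hl, zero_mul, integral_zero, neg_neg, mul_one] at h
  have h2 : ∀ x : Fin d → ℝ, fderiv ℝ g x v = lineDeriv ℝ g x v := fun x =>
    ((hg.differentiable (by simp) x).lineDeriv_eq_fderiv).symm
  simp only [h2]
  exact h.symm

private lemma aux_pd_mul {d : ℕ} {x v : Fin d → ℝ} {f g : (Fin d → ℝ) → ℂ}
    (hf : DifferentiableAt ℝ f x) (hg : DifferentiableAt ℝ g x) :
    fderiv ℝ (fun y => f y * g y) x v = fderiv ℝ f x v * g x + f x * fderiv ℝ g x v := by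
  rw [fderiv_fun_mul hf hg]
  simp only [ContinuousLinearMap.add_apply, ContinuousLinearMap.smul_apply, smul_eq_mul]
  ring

private lemma aux_pd_clm {d : ℕ} {x : Fin d → ℝ} (v : Fin d → ℝ)
    {F : Type} [NormedAddCommGroup F] [NormedSpace ℝ F]
    {G : Type} [NormedAddCommGroup G] [NormedSpace ℝ G]
    {f : (Fin d → ℝ) → F} (L : F →L[ℝ] G) (hf : DifferentiableAt ℝ f x) :
    fderiv ℝ (fun y => L (f y)) x v = L (fderiv ℝ f x v) := by
  have h : fderiv ℝ (L ∘ f) x = (fderiv ℝ L (f x)).comp (fderiv ℝ f x) :=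
    fderiv_comp x L.differentiableAt hf
  rw [L.fderiv] at h
  simpa [Function.comp_def] using congrArg (fun M => M v) h

private lemma aux_pd_conj {d : ℕ} {x v : Fin d → ℝ} {f : (Fin d → ℝ) → ℂ}
    (hf : DifferentiableAt ℝ f x) :
    fderiv ℝ (fun y => (starRingEnd ℂ) (f y)) x v = (starRingEnd ℂ) (fderiv ℝ f x v) :=
  aux_pd_clm v Complex.conjCLE.toContinuousLinearMap hf

private lemma aux_pd_ofReal {d : ℕ} {x v : Fin d → ℝ} {f : (Fin d → ℝ) → ℝ}
    (hf : DifferentiableAt ℝ f x) :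
    fderiv ℝ (fun y => ((f y : ℝ) : ℂ)) x v = (fderiv ℝ f x v : ℂ) :=
  aux_pd_clm v Complex.ofRealCLM hf

private lemma aux_pd_re {d : ℕ} {x v : Fin d → ℝ} {f : (Fin d → ℝ) → ℂ}
    (hf : DifferentiableAt ℝ f x) :
    fderiv ℝ (fun y => (f y).re) x v = (fderiv ℝ f x v).re :=
  aux_pd_clm v Complex.reCLM hf

/-- Agmon identity (Euclidean version): if `ψ` is a compactly supported smooth
eigenfunction of the magnetic Schrödinger operator `Σ_k (-ihbar∂_k - A_k)²` with
eigenvalue `λ`, and `Φ` is smooth real with `e^Φ ψ` compactly supported, then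
`∫ |(ihbar∇+A)(e^Φψ)|² = λ ∫ |e^Φψ|² + hbar² ∫ |∇Φ|² |e^Φψ|²`. -/
theorem stmt14 {d : ℕ} (hbar : ℝ) (hhbarpos : 0 < hbar)
    (A : (Fin d → ℝ) → (Fin d → ℝ)) (hA : ContDiff ℝ (⊤ : ℕ∞) A)
    (ψ : (Fin d → ℝ) → ℂ) (hψ : ContDiff ℝ (⊤ : ℕ∞) ψ) (hψs : HasCompactSupport ψ)
    (Φ : (Fin d → ℝ) → ℝ) (hΦ : ContDiff ℝ (⊤ : ℕ∞) Φ)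
    (hΦψ : HasCompactSupport (fun x => (Real.exp (Φ x) : ℂ) * ψ x))
    (lam : ℝ)
    (D : Fin d → ((Fin d → ℝ) → ℂ) → ((Fin d → ℝ) → ℂ))
    (hD : ∀ k f x, D k f x
      = -(Complex.I * (hbar : ℂ) * fderiv ℝ f x (Pi.single k 1)) - (A x k : ℂ) * f x)
    (heig : ∀ x, ∑ k, D k (D k ψ) x = (lam : ℂ) * ψ x) :
    (∫ x : Fin d → ℝ, ∑ k,
        ‖Complex.I * (hbar : ℂ)
            * fderiv ℝ (fun y => (Real.exp (Φ y) : ℂ) * ψ y) x (Pi.single k 1)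
          + (A x k : ℂ) * ((Real.exp (Φ x) : ℂ) * ψ x)‖ ^ 2)
      = lam * (∫ x : Fin d → ℝ, ‖(Real.exp (Φ x) : ℂ) * ψ x‖ ^ 2)
        + hbar ^ 2 * ∫ x : Fin d → ℝ,
            (∑ k, (fderiv ℝ Φ x (Pi.single k 1)) ^ 2)
              * ‖(Real.exp (Φ x) : ℂ) * ψ x‖ ^ 2 := by
  classical
  set φ : (Fin d → ℝ) → ℂ := fun x => (Real.exp (Φ x) : ℂ) * ψ x with hφdef
  -- basic smoothness
  have hψdiff : Differentiable ℝ ψ := hψ.differentiable (by simp)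
  have hΦdiff : Differentiable ℝ Φ := hΦ.differentiable (by simp)
  have hexp : ContDiff ℝ (⊤ : ℕ∞) fun x : Fin d → ℝ => Real.exp (Φ x) := Real.contDiff_exp.comp hΦ
  have hexpC : ContDiff ℝ (⊤ : ℕ∞) fun x : Fin d → ℝ => ((Real.exp (Φ x) : ℝ) : ℂ) :=
    Complex.ofRealCLM.contDiff.comp hexp
  have hφsm : ContDiff ℝ (⊤ : ℕ∞) φ := hexpC.mul hψ
  have hE2 : ContDiff ℝ (⊤ : ℕ∞) fun x : Fin d → ℝ => Real.exp (2 * Φ x) :=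
    Real.contDiff_exp.comp (contDiff_const.mul hΦ)
  have hE2C : ContDiff ℝ (⊤ : ℕ∞) fun x : Fin d → ℝ => ((Real.exp (2 * Φ x) : ℝ) : ℂ) :=
    Complex.ofRealCLM.contDiff.comp hE2
  have hAk : ∀ k, ContDiff ℝ (⊤ : ℕ∞) fun x : Fin d → ℝ => ((A x k : ℝ) : ℂ) := fun k =>
    Complex.ofRealCLM.contDiff.comp ((contDiff_pi.mp hA) k)
  have hdψ : ∀ k, ContDiff ℝ (⊤ : ℕ∞) fun x : Fin d → ℝ => fderiv ℝ ψ x (Pi.single k 1) := fun k =>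
    (hψ.fderiv_right (by simp)).clm_apply contDiff_const
  have hconjψ : ContDiff ℝ (⊤ : ℕ∞) fun y : Fin d → ℝ => (starRingEnd ℂ) (ψ y) :=
    Complex.conjCLE.toContinuousLinearMap.contDiff.comp hψ
  have hDψ : ∀ k, ContDiff ℝ (⊤ : ℕ∞) (D k ψ) := by
    intro k
    have h : D k ψ = fun x => -(Complex.I * (hbar : ℂ) * fderiv ℝ ψ x (Pi.single k 1))
        - (A x k : ℂ) * ψ x := funext fun x => hD k ψ x
    rw [h]
    exact ((contDiff_const.mul (hdψ k)).neg.sub ((hAk k).mul hψ))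
  -- the vector field whose divergence we integrate
  set W : Fin d → (Fin d → ℝ) → ℂ := fun k y =>
    Complex.I * (hbar : ℂ) * D k ψ y * ((Real.exp (2 * Φ y) : ℝ) : ℂ) * (starRingEnd ℂ) (ψ y)
    with hWdef
  set V : Fin d → (Fin d → ℝ) → ℝ := fun k y => (W k y).re with hVdef
  have hW : ∀ k, ContDiff ℝ (⊤ : ℕ∞) (W k) := fun k =>
    (((contDiff_const.mul (hDψ k)).mul hE2C).mul hconjψ)
  have hV : ∀ k, ContDiff ℝ (⊤ : ℕ∞) (V k) := fun k => Complex.reCLM.contDiff.comp (hW k)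
  have hconjψs : HasCompactSupport fun y : Fin d → ℝ => (starRingEnd ℂ) (ψ y) :=
    hψs.comp_left (map_zero _)
  have hWs : ∀ k, HasCompactSupport (W k) := fun k => hconjψs.mul_left
  have hVs : ∀ k, HasCompactSupport (V k) := fun k =>
    (hWs k).comp_left (g := Complex.re) rfl
  have hIBP : ∀ k, ∫ x : Fin d → ℝ, fderiv ℝ (V k) x (Pi.single k 1) = 0 := fun k =>
    aux_int_fderiv_zero (V k) (hV k) (hVs k) _
  -- pointwise key identity
  have key : ∀ x : Fin d → ℝ,
      (∑ k, ‖Complex.I * (hbar : ℂ) * fderiv ℝ φ x (Pi.single k 1)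
          + (A x k : ℂ) * φ x‖ ^ 2)
      = lam * ‖φ x‖ ^ 2
        + hbar ^ 2 * ((∑ k, (fderiv ℝ Φ x (Pi.single k 1)) ^ 2) * ‖φ x‖ ^ 2)
        + ∑ k, fderiv ℝ (V k) x (Pi.single k 1) := by
    intro x
    -- derivative of φ
    have hexpdx : DifferentiableAt ℝ (fun y : Fin d → ℝ => ((Real.exp (Φ y) : ℝ) : ℂ)) x :=
      (hexpC.differentiable (by simp)) x
    have hφk : ∀ k : Fin d, fderiv ℝ φ x (Pi.single k 1)
        = ((Real.exp (Φ x) * fderiv ℝ Φ x (Pi.single k 1) : ℝ) : ℂ) * ψ x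
          + (Real.exp (Φ x) : ℂ) * fderiv ℝ ψ x (Pi.single k 1) := by
      intro k
      have h0 : fderiv ℝ φ x (Pi.single k 1)
          = fderiv ℝ (fun y => ((Real.exp (Φ y) : ℝ) : ℂ) * ψ y) x (Pi.single k 1) := by
        rw [hφdef]
      rw [h0, aux_pd_mul hexpdx (hψdiff x),
        aux_pd_ofReal ((hexp.differentiable (by simp)) x),
        fderiv_exp (hΦdiff x)]
      simp only [ContinuousLinearMap.coe_smul', Pi.smul_apply, smul_eq_mul]
    -- derivative of W k
    have hWk : ∀ k : Fin d, fderiv ℝ (W k) x (Pi.single k 1)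
        = (Complex.I * (hbar : ℂ) * fderiv ℝ (D k ψ) x (Pi.single k 1)
              * ((Real.exp (2 * Φ x) : ℝ) : ℂ)
            + Complex.I * (hbar : ℂ) * D k ψ x
              * ((Real.exp (2 * Φ x) * (2 * fderiv ℝ Φ x (Pi.single k 1)) : ℝ) : ℂ))
            * (starRingEnd ℂ) (ψ x)
          + Complex.I * (hbar : ℂ) * D k ψ x * ((Real.exp (2 * Φ x) : ℝ) : ℂ)
            * (starRingEnd ℂ) (fderiv ℝ ψ x (Pi.single k 1)) := by
      intro k
      have hDψd : DifferentiableAt ℝ (D k ψ) x := ((hDψ k).differentiable (by simp)) x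
      have hE2Cd : DifferentiableAt ℝ (fun y : Fin d → ℝ => ((Real.exp (2 * Φ y) : ℝ) : ℂ)) x :=
        (hE2C.differentiable (by simp)) x
      have hconjd : DifferentiableAt ℝ (fun y : Fin d → ℝ => (starRingEnd ℂ) (ψ y)) x :=
        (hconjψ.differentiable (by simp)) x
      have h1 : DifferentiableAt ℝ (fun y => Complex.I * (hbar : ℂ) * D k ψ y) x :=
        hDψd.const_mul _
      have h2 : DifferentiableAt ℝ
          (fun y => Complex.I * (hbar : ℂ) * D k ψ y * ((Real.exp (2 * Φ y) : ℝ) : ℂ)) x :=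
        h1.mul hE2Cd
      have h0 : fderiv ℝ (W k) x (Pi.single k 1)
          = fderiv ℝ (fun y => Complex.I * (hbar : ℂ) * D k ψ y
              * ((Real.exp (2 * Φ y) : ℝ) : ℂ) * (starRingEnd ℂ) (ψ y)) x (Pi.single k 1) := by
        rw [hWdef]
      rw [h0, aux_pd_mul h2 hconjd, aux_pd_mul h1 hE2Cd, aux_pd_conj (hψdiff x),
        aux_pd_ofReal ((hE2.differentiable (by simp)) x),
        fderiv_exp ((hΦdiff x).const_mul 2), fderiv_const_mul (hΦdiff x) (2 : ℝ),
        fderiv_const_mul hDψd (Complex.I * (hbar : ℂ))]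
      simp only [ContinuousLinearMap.coe_smul', Pi.smul_apply, smul_eq_mul]
      try push_cast
      try ring
    -- derivative of V k
    have hVk : ∀ k : Fin d, fderiv ℝ (V k) x (Pi.single k 1)
        = (fderiv ℝ (W k) x (Pi.single k 1)).re := by
      intro k
      have h0 : fderiv ℝ (V k) x (Pi.single k 1)
          = fderiv ℝ (fun y => (W k y).re) x (Pi.single k 1) := by rw [hVdef]
      rw [h0]
      exact aux_pd_re (((hW k).differentiable (by simp)) x)
    -- eigenvalue equation at x
    have heigx : ∑ k, (-(Complex.I * (hbar : ℂ) * fderiv ℝ (D k ψ) x (Pi.single k 1))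
          - ((A x k : ℝ) : ℂ) * D k ψ x) = (lam : ℂ) * ψ x := by
      rw [← heig x]
      exact Finset.sum_congr rfl fun k _ => (hD k (D k ψ) x).symm
    -- per-coordinate algebraic identity
    have claimA : ∀ k : Fin d,
        ‖Complex.I * (hbar : ℂ) * fderiv ℝ φ x (Pi.single k 1) + ((A x k : ℝ) : ℂ) * φ x‖ ^ 2
        = ((-(Complex.I * (hbar : ℂ) * fderiv ℝ (D k ψ) x (Pi.single k 1))
              - ((A x k : ℝ) : ℂ) * D k ψ x)
            * ((Real.exp (2 * Φ x) : ℝ) : ℂ) * (starRingEnd ℂ) (ψ x)).re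
          + hbar ^ 2 * (fderiv ℝ Φ x (Pi.single k 1)) ^ 2 * ‖φ x‖ ^ 2
          + fderiv ℝ (V k) x (Pi.single k 1) := by
      intro k
      rw [hVk k, hWk k, hφk k, hD k ψ x]
      have hφx : φ x = (Real.exp (Φ x) : ℂ) * ψ x := by rw [hφdef]
      rw [hφx]
      have hE2x : Real.exp (2 * Φ x) = Real.exp (Φ x) * Real.exp (Φ x) := by
        rw [two_mul, Real.exp_add]
      rw [hE2x]
      simp only [Complex.sq_norm, Complex.normSq_apply, Complex.mul_re,
        Complex.mul_im, Complex.add_re, Complex.add_im, Complex.sub_re, Complex.sub_im,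
        Complex.neg_re, Complex.neg_im, Complex.I_re, Complex.I_im, Complex.ofReal_re,
        Complex.ofReal_im, Complex.conj_re, Complex.conj_im, Complex.ofReal_mul]
      ring
    -- sum the eigen-term
    have hsum1 : (∑ k, ((-(Complex.I * (hbar : ℂ) * fderiv ℝ (D k ψ) x (Pi.single k 1))
            - ((A x k : ℝ) : ℂ) * D k ψ x)
          * ((Real.exp (2 * Φ x) : ℝ) : ℂ) * (starRingEnd ℂ) (ψ x)).re)
        = lam * ‖φ x‖ ^ 2 := by
      rw [← Complex.re_sum, ← Finset.sum_mul, ← Finset.sum_mul, heigx]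
      have h1 : (lam : ℂ) * ψ x * ((Real.exp (2 * Φ x) : ℝ) : ℂ) * (starRingEnd ℂ) (ψ x)
          = ((lam * Real.exp (2 * Φ x) : ℝ) : ℂ) * (ψ x * (starRingEnd ℂ) (ψ x)) := by
        push_cast; ring
      rw [h1, Complex.mul_conj]
      have hφx : φ x = (Real.exp (Φ x) : ℂ) * ψ x := by rw [hφdef]
      rw [hφx]
      have hE2x : Real.exp (2 * Φ x) = Real.exp (Φ x) * Real.exp (Φ x) := by
        rw [two_mul, Real.exp_add]
      rw [hE2x]
      have he : ‖(Real.exp (Φ x) : ℂ)‖ = Real.exp (Φ x) := by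
        rw [Complex.norm_real]; exact abs_of_pos (Real.exp_pos _)
      rw [norm_mul, he]
      simp only [Complex.mul_re, Complex.ofReal_re, Complex.ofReal_im, Complex.ofReal_mul,
        Complex.normSq_eq_norm_sq]
      ring
    have hsum2 : (∑ k, hbar ^ 2 * (fderiv ℝ Φ x (Pi.single k 1)) ^ 2 * ‖φ x‖ ^ 2)
        = hbar ^ 2 * ((∑ k, (fderiv ℝ Φ x (Pi.single k 1)) ^ 2) * ‖φ x‖ ^ 2) := by
      rw [← Finset.sum_mul, ← Finset.mul_sum, mul_assoc]
    calc (∑ k, ‖Complex.I * (hbar : ℂ) * fderiv ℝ φ x (Pi.single k 1)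
            + ((A x k : ℝ) : ℂ) * φ x‖ ^ 2)
        = ∑ k, (((-(Complex.I * (hbar : ℂ) * fderiv ℝ (D k ψ) x (Pi.single k 1))
              - ((A x k : ℝ) : ℂ) * D k ψ x)
            * ((Real.exp (2 * Φ x) : ℝ) : ℂ) * (starRingEnd ℂ) (ψ x)).re
          + hbar ^ 2 * (fderiv ℝ Φ x (Pi.single k 1)) ^ 2 * ‖φ x‖ ^ 2
          + fderiv ℝ (V k) x (Pi.single k 1)) := Finset.sum_congr rfl fun k _ => claimA k
      _ = (∑ k, ((-(Complex.I * (hbar : ℂ) * fderiv ℝ (D k ψ) x (Pi.single k 1))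
              - ((A x k : ℝ) : ℂ) * D k ψ x)
            * ((Real.exp (2 * Φ x) : ℝ) : ℂ) * (starRingEnd ℂ) (ψ x)).re)
          + (∑ k, hbar ^ 2 * (fderiv ℝ Φ x (Pi.single k 1)) ^ 2 * ‖φ x‖ ^ 2)
          + ∑ k, fderiv ℝ (V k) x (Pi.single k 1) := by
          rw [Finset.sum_add_distrib, Finset.sum_add_distrib]
      _ = lam * ‖φ x‖ ^ 2
          + hbar ^ 2 * ((∑ k, (fderiv ℝ Φ x (Pi.single k 1)) ^ 2) * ‖φ x‖ ^ 2)
          + ∑ k, fderiv ℝ (V k) x (Pi.single k 1) := by rw [hsum1, hsum2]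
  -- integrability
  have hφc : Continuous φ := hφsm.continuous
  have hnφ2s : HasCompactSupport fun x : Fin d → ℝ => ‖φ x‖ ^ 2 :=
    hΦψ.comp_left (g := fun z : ℂ => ‖z‖ ^ 2) (by simp)
  have i1 : Integrable (fun x : Fin d → ℝ => ‖φ x‖ ^ 2) :=
    ((hφc.norm.pow 2)).integrable_of_hasCompactSupport hnφ2s
  have hgradc : Continuous fun x : Fin d → ℝ => ∑ k, (fderiv ℝ Φ x (Pi.single k 1)) ^ 2 := by
    apply continuous_finset_sum
    intro k _
    exact ((hΦ.continuous_fderiv (by simp)).clm_apply continuous_const).pow 2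
  have i2 : Integrable (fun x : Fin d → ℝ =>
      (∑ k, (fderiv ℝ Φ x (Pi.single k 1)) ^ 2) * ‖φ x‖ ^ 2) :=
    (hgradc.mul (hφc.norm.pow 2)).integrable_of_hasCompactSupport hnφ2s.mul_left
  have i3 : ∀ k, Integrable (fun x : Fin d → ℝ => fderiv ℝ (V k) x (Pi.single k 1)) := by
    intro k
    refine (((hV k).continuous_fderiv (by simp)).clm_apply continuous_const).integrable_of_hasCompactSupport ?_
    exact ((hVs k).fderiv ℝ).comp_left (g := fun L : (Fin d → ℝ) →L[ℝ] ℝ => L (Pi.single k 1))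
      rfl
  -- assemble
  calc (∫ x : Fin d → ℝ, ∑ k, ‖Complex.I * (hbar : ℂ) * fderiv ℝ φ x (Pi.single k 1)
          + (A x k : ℂ) * φ x‖ ^ 2)
      = ∫ x : Fin d → ℝ, (lam * ‖φ x‖ ^ 2
          + hbar ^ 2 * ((∑ k, (fderiv ℝ Φ x (Pi.single k 1)) ^ 2) * ‖φ x‖ ^ 2)
          + ∑ k, fderiv ℝ (V k) x (Pi.single k 1)) :=
        integral_congr_ae (Filter.Eventually.of_forall key)
    _ = (∫ x : Fin d → ℝ, (lam * ‖φ x‖ ^ 2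
          + hbar ^ 2 * ((∑ k, (fderiv ℝ Φ x (Pi.single k 1)) ^ 2) * ‖φ x‖ ^ 2)))
        + ∫ x : Fin d → ℝ, ∑ k, fderiv ℝ (V k) x (Pi.single k 1) :=
        integral_add ((i1.const_mul lam).add (i2.const_mul (hbar ^ 2)))
          (integrable_finset_sum _ fun k _ => i3 k)
    _ = ((∫ x : Fin d → ℝ, lam * ‖φ x‖ ^ 2)
          + ∫ x : Fin d → ℝ, hbar ^ 2 * ((∑ k, (fderiv ℝ Φ x (Pi.single k 1)) ^ 2) * ‖φ x‖ ^ 2))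
        + ∑ k, ∫ x : Fin d → ℝ, fderiv ℝ (V k) x (Pi.single k 1) := by
        rw [integral_add (i1.const_mul lam) (i2.const_mul (hbar ^ 2)),
          integral_finset_sum _ (fun k _ => i3 k)]
    _ = lam * (∫ x : Fin d → ℝ, ‖φ x‖ ^ 2)
        + hbar ^ 2 * ∫ x : Fin d → ℝ,
            (∑ k, (fderiv ℝ Φ x (Pi.single k 1)) ^ 2) * ‖φ x‖ ^ 2 := by
        simp [hIBP, integral_const_mul]
end

section
/- Exponential decay from the Agmon identity: under the hypotheses of the Agmon identity, if moreover q(v) ≥ ∫ W |v|² dx for all v (a lower bound by a potential W) and λ ≤ b₁, and Φ satisfies ħ²|∇Φ|² ≤ ε and W ≥ b₁ + 2ε on the support of a region S with Φ = 0 off S... then ∫_S (W − b₁ − ħ²|∇Φ|²)|e^Φψ|² dx ≤ ∫_{S^c} (b₁ + ħ²|∇Φ|² − W)|e^Φψ|² dx. Equivalently: ∫ (W(x) − λ − ħ²|∇Φ(x)|²)|e^{Φ(x)}ψ(x)|² dx ≤ 0. -/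
open MeasureTheory

section auxlemmas
variable {E : Type*} [NormedAddCommGroup E] [NormedSpace ℝ E] {x w : E}

lemma myfd_mul {𝔸 : Type*} [NormedCommRing 𝔸] [NormedAlgebra ℝ 𝔸] {f g : E → 𝔸}
    (hf : DifferentiableAt ℝ f x) (hg : DifferentiableAt ℝ g x) :
    fderiv ℝ (fun y => f y * g y) x w
      = f x * fderiv ℝ g x w + g x * fderiv ℝ f x w := by
  rw [fderiv_fun_mul hf hg]; simp [smul_eq_mul]

lemma myfd_add {𝔸 : Type*} [NormedAddCommGroup 𝔸] [NormedSpace ℝ 𝔸] {f g : E → 𝔸}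
    (hf : DifferentiableAt ℝ f x) (hg : DifferentiableAt ℝ g x) :
    fderiv ℝ (fun y => f y + g y) x w
      = fderiv ℝ f x w + fderiv ℝ g x w := by
  rw [fderiv_fun_add hf hg]; simp

lemma myfd_sub {𝔸 : Type*} [NormedAddCommGroup 𝔸] [NormedSpace ℝ 𝔸] {f g : E → 𝔸}
    (hf : DifferentiableAt ℝ f x) (hg : DifferentiableAt ℝ g x) :
    fderiv ℝ (fun y => f y - g y) x w
      = fderiv ℝ f x w - fderiv ℝ g x w := by
  rw [fderiv_fun_sub hf hg]; simp

lemma myfd_neg {𝔸 : Type*} [NormedAddCommGroup 𝔸] [NormedSpace ℝ 𝔸] {f : E → 𝔸} :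
    fderiv ℝ (fun y => -(f y)) x w = -(fderiv ℝ f x w) := by
  rw [fderiv_fun_neg]; simp

lemma myfd_conj {f : E → ℂ} (hf : DifferentiableAt ℝ f x) :
    fderiv ℝ (fun y => (starRingEnd ℂ) (f y)) x w
      = (starRingEnd ℂ) (fderiv ℝ f x w) := by
  have h := (Complex.conjCLE.hasFDerivAt.comp x hf.hasFDerivAt).fderiv
  have h2 : (fun y => (starRingEnd ℂ) (f y)) = (Complex.conjCLE : ℂ → ℂ) ∘ f := rfl
  rw [h2, h]; rfl

lemma myfd_im {f : E → ℂ} (hf : DifferentiableAt ℝ f x) :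
    fderiv ℝ (fun y => (f y).im) x w = (fderiv ℝ f x w).im := by
  have h := (Complex.imCLM.hasFDerivAt.comp x hf.hasFDerivAt).fderiv
  have h2 : (fun y => (f y).im) = (Complex.imCLM : ℂ → ℝ) ∘ f := rfl
  rw [h2, h]; rfl

lemma myfd_re {f : E → ℂ} (hf : DifferentiableAt ℝ f x) :
    fderiv ℝ (fun y => (f y).re) x w = (fderiv ℝ f x w).re := by
  have h := (Complex.reCLM.hasFDerivAt.comp x hf.hasFDerivAt).fderiv
  have h2 : (fun y => (f y).re) = (Complex.reCLM : ℂ → ℝ) ∘ f := rfl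
  rw [h2, h]; rfl

lemma myfd_ofReal {f : E → ℝ} (hf : DifferentiableAt ℝ f x) :
    fderiv ℝ (fun y => ((f y : ℝ) : ℂ)) x w = ((fderiv ℝ f x w : ℝ) : ℂ) := by
  have h := (Complex.ofRealCLM.hasFDerivAt.comp x hf.hasFDerivAt).fderiv
  have h2 : (fun y => ((f y : ℝ) : ℂ)) = (Complex.ofRealCLM : ℝ → ℂ) ∘ f := rfl
  rw [h2, h]; rfl

lemma myfd_exp {f : E → ℝ} (hf : DifferentiableAt ℝ f x) :
    fderiv ℝ (fun y => Real.exp (f y)) x w = Real.exp (f x) * fderiv ℝ f x w := by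
  have h := (hf.hasFDerivAt.exp).fderiv
  rw [h]; simp [smul_eq_mul]

@[fun_prop] lemma mydiff_re : Differentiable ℝ (fun z : ℂ => z.re) := Complex.reCLM.differentiable
@[fun_prop] lemma mydiff_im : Differentiable ℝ (fun z : ℂ => z.im) := Complex.imCLM.differentiable
@[fun_prop] lemma mydiff_ofReal : Differentiable ℝ (fun r : ℝ => (r : ℂ)) :=
  Complex.ofRealCLM.differentiable
@[fun_prop] lemma mydiff_conj : Differentiable ℝ (fun z : ℂ => (starRingEnd ℂ) z) :=
  Complex.conjCLE.differentiable

@[fun_prop] lemma mycd_re : ContDiff ℝ (⊤ : ℕ∞) (fun z : ℂ => z.re) := Complex.reCLM.contDiff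
@[fun_prop] lemma mycd_im : ContDiff ℝ (⊤ : ℕ∞) (fun z : ℂ => z.im) := Complex.imCLM.contDiff
@[fun_prop] lemma mycd_ofReal : ContDiff ℝ (⊤ : ℕ∞) (fun r : ℝ => (r : ℂ)) := Complex.ofRealCLM.contDiff
@[fun_prop] lemma mycd_conj : ContDiff ℝ (⊤ : ℕ∞) (fun z : ℂ => (starRingEnd ℂ) z) :=
  (Complex.conjCLE : ℂ →L[ℝ] ℂ).contDiff

lemma my_normsq (z : ℂ) : ‖z‖^2 = z.re^2 + z.im^2 := by
  rw [Complex.sq_norm, Complex.normSq_apply]; ring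

lemma my_normsq2 (z : ℂ) : ‖z‖ * ‖z‖ = z.re * z.re + z.im * z.im := by
  have := my_normsq z; nlinarith [this]

end auxlemmas

lemma my_div_zero {d : ℕ} (g : (Fin d → ℝ) → ℝ) (hg : ContDiff ℝ (⊤ : ℕ∞) g)
    (hgs : HasCompactSupport g) (w : Fin d → ℝ) :
    ∫ x : Fin d → ℝ, fderiv ℝ g x w = 0 := by
  have hdiff : Differentiable ℝ g := hg.differentiable (by simp)
  have hcont : Continuous fun x => fderiv ℝ g x w :=
    ((hg.continuous_fderiv (by simp)).clm_apply continuous_const)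
  have h1 : Integrable (fun x : Fin d → ℝ => fderiv ℝ g x w * 1) := by
    have hcs : HasCompactSupport fun x => fderiv ℝ g x w :=
      (hgs.fderiv (𝕜 := ℝ)).comp_left (g := fun L : (Fin d → ℝ) →L[ℝ] ℝ => L w) rfl
    simpa using (hcont.integrable_of_hasCompactSupport hcs)
  have h2 : Integrable (fun x : Fin d → ℝ => g x * fderiv ℝ (fun _ => (1:ℝ)) x w) := by
    simpa [fderiv_const] using (integrable_zero _ _ (volume : Measure (Fin d → ℝ)))
  have h3 : Integrable (fun x : Fin d → ℝ => g x * 1) := by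
    simpa using (hg.continuous.integrable_of_hasCompactSupport hgs)
  have := integral_mul_fderiv_eq_neg_fderiv_mul_of_integrable h1 h2 h3 (fun x _ => hdiff x)
    (fun x _ => differentiableAt_const (1:ℝ))
  simp [fderiv_const] at this
  linarith [this]

set_option maxHeartbeats 1000000 in
/-- Exponential decay inequality from the Agmon identity: if moreover the
magnetic quadratic form is bounded below by the potential `W`, then
`∫ (W - λ - hbar²|∇Φ|²) |e^Φ ψ|² ≤ 0`. -/
theorem stmt15 {d : ℕ} (hbar : ℝ) (hhbarpos : 0 < hbar)
    (A : (Fin d → ℝ) → (Fin d → ℝ)) (hA : ContDiff ℝ (⊤ : ℕ∞) A)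
    (ψ : (Fin d → ℝ) → ℂ) (hψ : ContDiff ℝ (⊤ : ℕ∞) ψ) (hψs : HasCompactSupport ψ)
    (Φ : (Fin d → ℝ) → ℝ) (hΦ : ContDiff ℝ (⊤ : ℕ∞) Φ)
    (lam : ℝ)
    (D : Fin d → ((Fin d → ℝ) → ℂ) → ((Fin d → ℝ) → ℂ))
    (hD : ∀ k f x, D k f x
      = -(Complex.I * (hbar : ℂ) * fderiv ℝ f x (Pi.single k 1)) - (A x k : ℂ) * f x)
    (heig : ∀ x, ∑ k, D k (D k ψ) x = (lam : ℂ) * ψ x)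
    (W : (Fin d → ℝ) → ℝ) (hW : Continuous W)
    (hform : ∀ v : (Fin d → ℝ) → ℂ, ContDiff ℝ (⊤ : ℕ∞) v → HasCompactSupport v →
      (∫ x : Fin d → ℝ, W x * ‖v x‖ ^ 2)
        ≤ ∫ x : Fin d → ℝ, ∑ k,
            ‖Complex.I * (hbar : ℂ) * fderiv ℝ v x (Pi.single k 1)
              + (A x k : ℂ) * v x‖ ^ 2) :
    (∫ x : Fin d → ℝ,
        (W x - lam - hbar ^ 2 * ∑ k, (fderiv ℝ Φ x (Pi.single k 1)) ^ 2)
          * ‖(Real.exp (Φ x) : ℂ) * ψ x‖ ^ 2) ≤ 0 := by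
  classical
  -- notation
  set v : (Fin d → ℝ) → ℂ := fun y => ((Real.exp (Φ y) : ℝ) : ℂ) * ψ y with hvdef
  set G : Fin d → (Fin d → ℝ) → ℝ := fun k y =>
      hbar * ((starRingEnd ℂ) (((Real.exp (Φ y) : ℝ) : ℂ) * ψ y) *
        (Complex.I * (hbar:ℂ) * (((Real.exp (Φ y) : ℝ) : ℂ) * fderiv ℝ ψ y (Pi.single k 1)
            + ((fderiv ℝ Φ y (Pi.single k 1) : ℝ) : ℂ) * (((Real.exp (Φ y) : ℝ) : ℂ) * ψ y))
          + ((A y k : ℝ) : ℂ) * (((Real.exp (Φ y) : ℝ) : ℂ) * ψ y))).im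
      - hbar^2 * (Real.exp (Φ y)^2 * fderiv ℝ Φ y (Pi.single k 1)
          * ((starRingEnd ℂ) (ψ y) * ψ y).re) with hGdef
  -- differentiability facts
  have hψd : Differentiable ℝ ψ := hψ.differentiable (by simp)
  have hΦd : Differentiable ℝ Φ := hΦ.differentiable (by simp)
  have hPc : ∀ k : Fin d, ContDiff ℝ (⊤ : ℕ∞) (fun y => fderiv ℝ ψ y (Pi.single k 1)) := fun k =>
    (ContinuousLinearMap.apply ℝ ℂ (Pi.single k 1 : Fin d → ℝ)).contDiff.comp
      (hψ.fderiv_right (by simp))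
  have hQc : ∀ k : Fin d, ContDiff ℝ (⊤ : ℕ∞) (fun y => fderiv ℝ Φ y (Pi.single k 1)) := fun k =>
    (ContinuousLinearMap.apply ℝ ℝ (Pi.single k 1 : Fin d → ℝ)).contDiff.comp
      (hΦ.fderiv_right (by simp))
  have hAc : ∀ k : Fin d, ContDiff ℝ (⊤ : ℕ∞) (fun y => A y k) := fun k =>
    (ContinuousLinearMap.proj (R := ℝ) (φ := fun _ : Fin d => ℝ) k).contDiff.comp hA
  have hvc : ContDiff ℝ (⊤ : ℕ∞) v := by
    rw [hvdef]; fun_prop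
  have hvd : Differentiable ℝ v := hvc.differentiable (by simp)
  have hvs : HasCompactSupport v := by
    rw [hvdef]; exact hψs.mul_left
  -- derivative of v
  have hdv : ∀ (k : Fin d) (y : Fin d → ℝ), fderiv ℝ v y (Pi.single k 1)
      = ((Real.exp (Φ y) : ℝ) : ℂ) * fderiv ℝ ψ y (Pi.single k 1)
        + ((fderiv ℝ Φ y (Pi.single k 1) : ℝ) : ℂ) * (((Real.exp (Φ y) : ℝ) : ℂ) * ψ y) := by
    intro k y
    rw [hvdef]
    rw [myfd_mul (by fun_prop) (hψd y)]
    rw [myfd_ofReal (by fun_prop)]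
    rw [myfd_exp (hΦd y)]
    push_cast
    ring
  -- second derivative names
  have hDD : ∀ x : Fin d → ℝ, (∑ k,
      (-(hbar:ℂ)^2 * fderiv ℝ (fun y => fderiv ℝ ψ y (Pi.single k 1)) x (Pi.single k 1)
        + Complex.I * (hbar:ℂ) * ((fderiv ℝ (fun y => A y k) x (Pi.single k 1) : ℝ) : ℂ) * ψ x
        + 2 * Complex.I * (hbar:ℂ) * ((A x k : ℝ) : ℂ) * fderiv ℝ ψ x (Pi.single k 1)
        + ((A x k : ℝ) : ℂ)^2 * ψ x)) = (lam : ℂ) * ψ x := by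
    intro x
    rw [← heig x]
    refine Finset.sum_congr rfl (fun k _ => ?_)
    have hPdk : Differentiable ℝ (fun y => fderiv ℝ ψ y (Pi.single k 1)) :=
      (hPc k).differentiable (by simp)
    have hAdk : Differentiable ℝ (fun y => A y k) := (hAc k).differentiable (by simp)
    have hfun : D k ψ = fun y => -(Complex.I * (hbar:ℂ) * fderiv ℝ ψ y (Pi.single k 1))
        - ((A y k : ℝ) : ℂ) * ψ y := funext fun y => hD k ψ y
    rw [hD k (D k ψ) x, hfun]
    simp (disch := fun_prop) only [myfd_sub, myfd_neg, myfd_mul, myfd_ofReal,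
      fderiv_fun_const, Pi.zero_apply, ContinuousLinearMap.zero_apply]
    linear_combination (-(hbar:ℂ)^2 *
      fderiv ℝ (fun y => fderiv ℝ ψ y (Pi.single k 1)) x (Pi.single k 1)) * Complex.I_mul_I
  -- per-k pointwise identity
  have hkey : ∀ (k : Fin d) (x : Fin d → ℝ),
      ‖Complex.I * (hbar:ℂ) * fderiv ℝ v x (Pi.single k 1) + ((A x k : ℝ) : ℂ) * v x‖^2
        = ((starRingEnd ℂ) (v x) * (((Real.exp (Φ x) : ℝ) : ℂ) *
            (-(hbar:ℂ)^2 * fderiv ℝ (fun y => fderiv ℝ ψ y (Pi.single k 1)) x (Pi.single k 1)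
              + Complex.I * (hbar:ℂ) * ((fderiv ℝ (fun y => A y k) x (Pi.single k 1) : ℝ) : ℂ) * ψ x
              + 2 * Complex.I * (hbar:ℂ) * ((A x k : ℝ) : ℂ) * fderiv ℝ ψ x (Pi.single k 1)
              + ((A x k : ℝ) : ℂ)^2 * ψ x))).re
          + hbar^2 * (fderiv ℝ Φ x (Pi.single k 1))^2 * (Real.exp (Φ x))^2 * ‖ψ x‖^2
          + fderiv ℝ (G k) x (Pi.single k 1) := by
    intro k x
    have hPdk : Differentiable ℝ (fun y => fderiv ℝ ψ y (Pi.single k 1)) :=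
      (hPc k).differentiable (by simp)
    have hQdk : Differentiable ℝ (fun y => fderiv ℝ Φ y (Pi.single k 1)) :=
      (hQc k).differentiable (by simp)
    have hAdk : Differentiable ℝ (fun y => A y k) := (hAc k).differentiable (by simp)
    rw [hdv k x, hvdef, hGdef]
    simp (disch := fun_prop) only [myfd_sub, myfd_mul, myfd_add, myfd_im, myfd_re,
      myfd_conj, myfd_ofReal, myfd_exp, pow_two, fderiv_fun_const, Pi.zero_apply,
      ContinuousLinearMap.zero_apply]
    simp only [my_normsq2, Complex.add_re, Complex.add_im, Complex.mul_re, Complex.mul_im,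
      Complex.ofReal_re, Complex.ofReal_im, Complex.I_re, Complex.I_im, Complex.conj_re,
      Complex.conj_im, Complex.re_ofNat, Complex.im_ofNat, Complex.neg_re, Complex.neg_im,
      Complex.sub_re, Complex.sub_im, Complex.zero_re, Complex.zero_im]
    ring
  -- norm of v
  have hnv : ∀ x : Fin d → ℝ, ‖v x‖^2 = (Real.exp (Φ x))^2 * ‖ψ x‖^2 := by
    intro x
    rw [hvdef]
    simp only [my_normsq, Complex.mul_re, Complex.mul_im, Complex.ofReal_re, Complex.ofReal_im]
    ring
  -- main pointwise identity
  have hmain : ∀ x : Fin d → ℝ,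
      (∑ k, ‖Complex.I * (hbar:ℂ) * fderiv ℝ v x (Pi.single k 1) + ((A x k : ℝ) : ℂ) * v x‖^2)
        = (lam + hbar^2 * ∑ k, (fderiv ℝ Φ x (Pi.single k 1))^2) * ‖v x‖^2
          + ∑ k, fderiv ℝ (G k) x (Pi.single k 1) := by
    intro x
    rw [Finset.sum_congr rfl (fun k (_ : k ∈ Finset.univ) => hkey k x)]
    rw [Finset.sum_add_distrib, Finset.sum_add_distrib]
    have h2 : (∑ k, ((starRingEnd ℂ) (v x) * (((Real.exp (Φ x) : ℝ) : ℂ) *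
            (-(hbar:ℂ)^2 * fderiv ℝ (fun y => fderiv ℝ ψ y (Pi.single k 1)) x (Pi.single k 1)
              + Complex.I * (hbar:ℂ) * ((fderiv ℝ (fun y => A y k) x (Pi.single k 1) : ℝ) : ℂ) * ψ x
              + 2 * Complex.I * (hbar:ℂ) * ((A x k : ℝ) : ℂ) * fderiv ℝ ψ x (Pi.single k 1)
              + ((A x k : ℝ) : ℂ)^2 * ψ x))).re)
        = lam * ((Real.exp (Φ x))^2 * ‖ψ x‖^2) := by
      rw [← Complex.re_sum, ← Finset.mul_sum, ← Finset.mul_sum, hDD x, hvdef]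
      simp only [my_normsq, Complex.mul_re, Complex.mul_im, Complex.conj_re, Complex.conj_im,
        Complex.ofReal_re, Complex.ofReal_im]
      ring
    rw [h2]
    have h3 : (∑ k, hbar^2 * (fderiv ℝ Φ x (Pi.single k 1))^2 * (Real.exp (Φ x))^2 * ‖ψ x‖^2)
        = (hbar^2 * ((Real.exp (Φ x))^2 * ‖ψ x‖^2)) * ∑ k, (fderiv ℝ Φ x (Pi.single k 1))^2 := by
      rw [Finset.mul_sum]
      refine Finset.sum_congr rfl (fun k _ => by ring)
    rw [h3, hnv x]
    ring
  -- regularity of G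
  have hGc : ∀ k, ContDiff ℝ (⊤ : ℕ∞) (G k) := by
    intro k
    have h1 := hPc k; have h2 := hQc k; have h3 := hAc k
    rw [hGdef]; fun_prop
  have hGs : ∀ k, HasCompactSupport (G k) := by
    intro k
    rw [hGdef]
    have hψs2 : HasCompactSupport (fun y => ((Real.exp (Φ y) : ℝ) : ℂ) * ψ y) := hψs.mul_left
    have t1 : HasCompactSupport
        (fun y => (starRingEnd ℂ) (((Real.exp (Φ y) : ℝ) : ℂ) * ψ y)) :=
      hψs2.comp_left (g := (starRingEnd ℂ)) (map_zero _)
    have t2 : HasCompactSupport (fun y =>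
        (starRingEnd ℂ) (((Real.exp (Φ y) : ℝ) : ℂ) * ψ y) *
        (Complex.I * (hbar:ℂ) * (((Real.exp (Φ y) : ℝ) : ℂ) * fderiv ℝ ψ y (Pi.single k 1)
            + ((fderiv ℝ Φ y (Pi.single k 1) : ℝ) : ℂ) * (((Real.exp (Φ y) : ℝ) : ℂ) * ψ y))
          + ((A y k : ℝ) : ℂ) * (((Real.exp (Φ y) : ℝ) : ℂ) * ψ y))) := t1.mul_right
    have t3 := t2.comp_left (g := Complex.im) (by simp)
    have t4 := t3.mul_left (f := fun _ => hbar)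
    have s1 : HasCompactSupport (fun y => (starRingEnd ℂ) (ψ y) * ψ y) := hψs.mul_left
    have s2 := s1.comp_left (g := Complex.re) (by simp)
    have s3 := s2.mul_left (f := fun y =>
      hbar^2 * (Real.exp (Φ y)^2 * fderiv ℝ Φ y (Pi.single k 1)))
    have s4 : HasCompactSupport (fun y => hbar^2 * (Real.exp (Φ y)^2
        * fderiv ℝ Φ y (Pi.single k 1) * ((starRingEnd ℂ) (ψ y) * ψ y).re)) := by
      have : (fun y => hbar^2 * (Real.exp (Φ y)^2
          * fderiv ℝ Φ y (Pi.single k 1) * ((starRingEnd ℂ) (ψ y) * ψ y).re))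
          = fun y => (hbar^2 * (Real.exp (Φ y)^2 * fderiv ℝ Φ y (Pi.single k 1)))
              * ((starRingEnd ℂ) (ψ y) * ψ y).re := by funext y; ring
      rw [this]; exact s3
    simp only [sub_eq_add_neg]
    exact t4.add (s4.comp_left (g := Neg.neg) neg_zero)
  -- integrability facts
  have hQcont : Continuous fun x : Fin d → ℝ =>
      lam + hbar^2 * ∑ k, (fderiv ℝ Φ x (Pi.single k 1))^2 :=
    continuous_const.add (continuous_const.mul
      (continuous_finset_sum _ (fun k _ => ((hQc k).continuous.pow 2))))
  have hnc : Continuous fun x => ‖v x‖^2 := (hvc.continuous.norm).pow 2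
  have hns : HasCompactSupport fun x => ‖v x‖^2 :=
    hvs.comp_left (g := fun z : ℂ => ‖z‖^2) (by simp)
  have hI1 : Integrable (fun x => W x * ‖v x‖^2) :=
    (hW.mul hnc).integrable_of_hasCompactSupport hns.mul_left
  have hI2 : Integrable (fun x : Fin d → ℝ =>
      (lam + hbar^2 * ∑ k, (fderiv ℝ Φ x (Pi.single k 1))^2) * ‖v x‖^2) :=
    (hQcont.mul hnc).integrable_of_hasCompactSupport hns.mul_left
  have hI3 : ∀ k, Integrable (fun x => fderiv ℝ (G k) x (Pi.single k 1)) := by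
    intro k
    have hc : Continuous fun x => fderiv ℝ (G k) x (Pi.single k 1) :=
      (((hGc k).continuous_fderiv (by simp)).clm_apply continuous_const)
    have hcs : HasCompactSupport fun x => fderiv ℝ (G k) x (Pi.single k 1) :=
      ((hGs k).fderiv (𝕜 := ℝ)).comp_left
        (g := fun L : (Fin d → ℝ) →L[ℝ] ℝ => L (Pi.single k 1)) rfl
    exact hc.integrable_of_hasCompactSupport hcs
  have hIG : Integrable (fun x : Fin d → ℝ => ∑ k, fderiv ℝ (G k) x (Pi.single k 1)) :=
    integrable_finset_sum _ (fun k _ => hI3 k)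
  -- the integral identity
  have hIS : (∫ x : Fin d → ℝ, ∑ k, ‖Complex.I * (hbar:ℂ) * fderiv ℝ v x (Pi.single k 1)
        + ((A x k : ℝ) : ℂ) * v x‖^2)
      = ∫ x : Fin d → ℝ,
          (lam + hbar^2 * ∑ k, (fderiv ℝ Φ x (Pi.single k 1))^2) * ‖v x‖^2 := by
    rw [integral_congr_ae (Filter.Eventually.of_forall hmain)]
    rw [integral_add hI2 hIG, integral_finset_sum _ (fun k _ => hI3 k)]
    rw [Finset.sum_congr rfl (fun k (_ : k ∈ Finset.univ) =>
      my_div_zero (G k) (hGc k) (hGs k) (Pi.single k 1))]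
    simp
  have hf2 := hform v hvc hvs
  rw [hIS] at hf2
  have hsplit : (∫ x : Fin d → ℝ,
        (W x - lam - hbar ^ 2 * ∑ k, (fderiv ℝ Φ x (Pi.single k 1)) ^ 2) * ‖v x‖ ^ 2)
      = (∫ x : Fin d → ℝ, W x * ‖v x‖^2) - ∫ x : Fin d → ℝ,
          (lam + hbar^2 * ∑ k, (fderiv ℝ Φ x (Pi.single k 1))^2) * ‖v x‖^2 := by
    rw [← integral_sub hI1 hI2]
    refine integral_congr_ae (Filter.Eventually.of_forall fun x => ?_)
    ring
  rw [hsplit]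
  linarith
end
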